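/- The kernel of L† : V₁ → 𝔹 equals the image of ker d₁ under the orthogonal projection π : W₁ → V₁, i.e. ker(L†) = π(ker d₁) as subspaces of V₁. (This is the claim ker ð_q^{t,p} = π(ker d_q^{t+p}) from the proof of the persistent sheaf Betti number proposition; no compatibility hypotheses relating d₀, d₁, V₀, V₁ are needed.) -/

import Mathlib

noncomputable section

open LinearMap RealInnerProductSpace

variable {W₀ W₁ W₂ : Type*}
  [NormedAddCommGroup W₀] [InnerProductSpace ℝ W₀] [FiniteDimensional ℝ W₀]
  [NormedAddCommGroup W₁] [InnerProductSpace ℝ W₁] [FiniteDimensional ℝ W₁]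
  [NormedAddCommGroup W₂] [InnerProductSpace ℝ W₂] [FiniteDimensional ℝ W₂]

/-- The compressed map `dᵗ : V₀ → V₁`, namely `π ∘ d₀` restricted to `V₀`, where
`π` is the orthogonal projection of `W₁` onto `V₁`. -/
def compressedMap (d₀ : W₀ →ₗ[ℝ] W₁) (V₀ : Submodule ℝ W₀) (V₁ : Submodule ℝ W₁) :
    V₀ →ₗ[ℝ] V₁ :=
  (Submodule.orthogonalProjectionOnto V₁).toLinearMap ∘ₗ d₀ ∘ₗ V₀.subtype

/-- The subspace `𝔹 = {e ∈ W₂ : d₁†(e) ∈ V₁}` of `W₂`. -/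
def sheafB (d₁ : W₁ →ₗ[ℝ] W₂) (V₁ : Submodule ℝ W₁) : Submodule ℝ W₂ :=
  V₁.comap (LinearMap.adjoint d₁)

/-- The map `L : 𝔹 → V₁` obtained by restricting `d₁†` to `𝔹`. -/
def sheafL (d₁ : W₁ →ₗ[ℝ] W₂) (V₁ : Submodule ℝ W₁) : sheafB d₁ V₁ →ₗ[ℝ] V₁ :=
  (LinearMap.adjoint d₁).restrict (fun _ hx => hx)

/-- The persistent sheaf Laplacian `Δ = L ∘ L† + dt ∘ dt† : V₁ → V₁`, built from
`d₁` (via `L`, the restriction of `d₁†` to `𝔹`) and a compressed map `dt`. -/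
def PSL {V₀ : Submodule ℝ W₀} (d₁ : W₁ →ₗ[ℝ] W₂) (V₁ : Submodule ℝ W₁)
    (dt : V₀ →ₗ[ℝ] V₁) : V₁ →ₗ[ℝ] V₁ :=
  sheafL d₁ V₁ ∘ₗ LinearMap.adjoint (sheafL d₁ V₁) + dt ∘ₗ LinearMap.adjoint dt


theorem Submodule.orthogonal_map_orthogonalProjectionOnto {𝕜 E : Type*} [RCLike 𝕜]
    [NormedAddCommGroup E] [InnerProductSpace 𝕜 E] (V K : Submodule 𝕜 E)
    [V.HasOrthogonalProjection] :
    (K.map V.orthogonalProjectionOnto.toLinearMap)ᗮ = Kᗮ.comap V.subtype := by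
  ext v
  simp only [Submodule.mem_orthogonal', Submodule.mem_map, Submodule.mem_comap,
    forall_exists_index, and_imp, forall_apply_eq_imp_iff₂, ContinuousLinearMap.coe_coe,
    Submodule.inner_orthogonalProjectionOnto_eq_of_mem_left, Submodule.subtype_apply]

theorem range_sheafL (d₁ : W₁ →ₗ[ℝ] W₂) (V₁ : Submodule ℝ W₁) :
    range (sheafL d₁ V₁) = (range (adjoint d₁)).comap V₁.subtype := by
  refine (range_restrict (adjoint d₁) (p := sheafB d₁ V₁) fun _ hx => hx).trans ?_
  rw [sheafB, Submodule.map_comap_eq, Submodule.comap_inf, Submodule.comap_subtype_self,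
    inf_top_eq]

/-- `ker (L†) = π (ker d₁)` as subspaces of `V₁`, where `π` is the
orthogonal projection of `W₁` onto `V₁`. -/
theorem ker_adjoint_L_eq_proj_ker (d₁ : W₁ →ₗ[ℝ] W₂) (V₁ : Submodule ℝ W₁) :
    LinearMap.ker (LinearMap.adjoint (sheafL d₁ V₁)) =
      (LinearMap.ker d₁).map (Submodule.orthogonalProjectionOnto V₁).toLinearMap :=
  calc ker (adjoint (sheafL d₁ V₁))
      _ = (range (sheafL d₁ V₁))ᗮ := (orthogonal_range _).symm
      _ = ((ker d₁)ᗮ.comap V₁.subtype)ᗮ := by rw [range_sheafL, orthogonal_ker]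
      _ = (ker d₁).map V₁.orthogonalProjectionOnto.toLinearMap := by
        rw [← Submodule.orthogonal_map_orthogonalProjectionOnto, Submodule.orthogonal_orthogonal]
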